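/- Let {X_1,...,X_m} be a set of mutually uncorrelated words of length n over a 4-letter alphabet, and let f(N) (with f(0)=1) be the number of words of length N containing none of X_1,...,X_m as a substring. Then the generating function F(z) = ∑_{N≥0} f(N) z^{-N} equals z^n / (m + (z−4) z^{n−1}). -/

import Mathlib

/-! Appending a letter to each of the `f (N - 1)` admissible words of length `N - 1` gives
`4 f (N - 1)` words whose prefix of length `N - 1` is admissible. Such a word can contain a
pattern only as a suffix, so the inadmissible ones are exactly the words `v X` with `X ∈ S` and
`v` admissible of length `N - n`. Each `v X` is indeed such an extension: an occurrence of a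
pattern `Y` in `v X.dropLast` would have to overlap `X.dropLast` in a nonempty suffix of `Y` that
is a proper prefix of `X`, which mutual uncorrelation forbids. Hence
`f N + m f (N - n) = 4 f (N - 1)`. -/

def selfUncorr {α : Type*} (X : List α) : Prop :=
  ∀ k : ℕ, 0 < k → k < X.length → X.take k ≠ X.drop (X.length - k)

def mutUncorr {α : Type*} (S : Set (List α)) : Prop :=
  (∀ X ∈ S, selfUncorr X) ∧
  ∀ X ∈ S, ∀ Y ∈ S, X ≠ Y →
    ∀ k : ℕ, 0 < k → k ≤ X.length → k ≤ Y.length →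
      X.take k ≠ Y.drop (Y.length - k)

open Finset

variable {α : Type*}

namespace List

theorem IsInfix.isSuffix_of_not_infix_dropLast {X l : List α} (h : X <:+: l)
    (hX : ¬ X <:+: l.dropLast) : X <:+ l := by
  obtain ⟨s, t, rfl⟩ := h
  rcases eq_or_ne t [] with rfl | ht
  · exact ⟨s, (append_nil _).symm⟩
  · exact absurd ⟨s, t.dropLast, (dropLast_append_of_ne_nil ht).symm⟩ hX

theorem IsInfix.exists_drop_prefix {Y u v : List α} (h : Y <:+: u ++ v) (hu : ¬ Y <:+: u)
    (hv : v.length < Y.length) : ∃ j < Y.length, Y.drop j <+: v := by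
  obtain ⟨s, t, hst⟩ := h
  have hlen := congrArg length hst
  simp only [length_append] at hlen
  have hsY : u.length < s.length + Y.length := by
    by_contra! hle
    have : s ++ Y <+: u :=
      prefix_of_prefix_length_le ⟨t, hst⟩ (prefix_append u v) (by simpa using hle)
    exact hu ((suffix_append s Y).isInfix.trans this.isInfix)
  refine ⟨u.length - s.length, by omega, t, ?_⟩
  have := congrArg (drop u.length) hst
  rwa [drop_left, drop_append_of_le_length (by simp; omega), drop_append,
    drop_eq_nil_of_le (by omega), nil_append] at this

end List

theorem mutUncorr.not_drop_prefix_dropLast {S : Set (List α)} (h : mutUncorr S) {X Y : List α}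
    (hX : X ∈ S) (hY : Y ∈ S) {j : ℕ} (hj : j < Y.length) : ¬ Y.drop j <+: X.dropLast := by
  intro hpre
  set k := Y.length - j
  have hkX : k < X.length := by
    have := hpre.length_le
    simp only [List.length_drop, List.length_dropLast] at this
    omega
  have heq : X.take k = Y.drop (Y.length - k) := by
    rw [show Y.length - k = j by omega, List.prefix_iff_eq_take.mp (hpre.trans X.dropLast_prefix),
      List.length_drop]
  by_cases hXY : X = Y
  · subst hXY
    exact h.1 X hX k (by omega) hkX heq
  · exact h.2 X hX Y hY hXY k (by omega) hkX.le (by omega) heq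

def Avoids (S : Finset (List α)) (l : List α) : Prop := ∀ X ∈ S, ¬ X <:+: l

variable {S : Finset (List α)} {n : ℕ}

theorem Avoids.mono {l l' : List α} (h : Avoids S l) (hl : l' <:+: l) : Avoids S l' :=
  fun X hX hX' => h X hX (hX'.trans hl)

theorem avoids_append_dropLast (hlen : ∀ X ∈ S, X.length = n)
    (h : mutUncorr (S : Set (List α))) {u X : List α} (hu : Avoids S u) (hX : X ∈ S) :
    Avoids S (u ++ X.dropLast) := by
  intro Y hY hocc
  have hYpos : 0 < Y.length := List.length_pos_iff.mpr fun hY0 =>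
    hu Y hY (hY0 ▸ List.nil_infix)
  obtain ⟨j, hj, hpre⟩ := hocc.exists_drop_prefix (hu Y hY)
    (by rw [List.length_dropLast, hlen X hX, ← hlen Y hY]; omega)
  exact h.not_drop_prefix_dropLast hX hY hj hpre

variable [DecidableEq α]

instance : DecidablePred (Avoids S) := fun l =>
  inferInstanceAs (Decidable (∀ X ∈ S, ¬ X <:+: l))

theorem card_image₂_append {A B : Finset (List α)} {a : ℕ} (hA : ∀ u ∈ A, u.length = a) :
    #(image₂ (· ++ ·) A B) = #A * #B :=
  card_image₂_iff.mpr fun p hp q hq hpq =>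
    have h := List.append_inj hpq (by rw [hA _ hp.1, hA _ hq.1])
    Prod.ext h.1 h.2

variable [Fintype α]

variable (α) in
def words (N : ℕ) : Finset (List α) := univ.image (List.ofFn : (Fin N → α) → List α)

theorem mem_words {N : ℕ} {l : List α} : l ∈ words α N ↔ l.length = N := by
  refine ⟨fun hl => ?_, fun hl => ?_⟩
  · obtain ⟨w, -, rfl⟩ := mem_image.mp hl
    exact List.length_ofFn
  · subst hl
    exact mem_image.mpr ⟨l.get, mem_univ _, List.ofFn_get l⟩

theorem card_words (N : ℕ) : #(words α N) = Fintype.card α ^ N := by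
  rw [words, card_image_of_injective _ List.ofFn_injective, card_univ, Fintype.card_fun,
    Fintype.card_fin]

variable (S) in
def avoiders (N : ℕ) : Finset (List α) := (words α N).filter (Avoids S)

theorem mem_avoiders {N : ℕ} {l : List α} : l ∈ avoiders S N ↔ l.length = N ∧ Avoids S l := by
  rw [avoiders, mem_filter, mem_words]

theorem card_filter_avoids_ofFn (N : ℕ) :
    #(univ.filter fun w : Fin N → α => Avoids S (List.ofFn w)) = #(avoiders S N) := by
  rw [avoiders, words, filter_image, card_image_of_injective _ List.ofFn_injective]

theorem avoiders_eq_words_of_lt (hlen : ∀ X ∈ S, X.length = n) {N : ℕ} (hN : N < n) :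
    avoiders S N = words α N :=
  filter_true_of_mem fun l hl X hX hocc => by
    have := hocc.length_le
    rw [hlen X hX, mem_words.mp hl] at this
    omega

variable (S) in
def oneLetterExtensions (M : ℕ) : Finset (List α) :=
  image₂ (· ++ ·) (avoiders S M) (words α 1)

theorem mem_oneLetterExtensions {M : ℕ} {l : List α} :
    l ∈ oneLetterExtensions S M ↔ l.length = M + 1 ∧ Avoids S l.dropLast := by
  simp only [oneLetterExtensions, mem_image₂, mem_avoiders, mem_words, List.length_eq_one_iff]
  constructor
  · rintro ⟨u, ⟨hu, hav⟩, _, ⟨a, rfl⟩, rfl⟩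
    simpa [hu] using hav
  · rintro ⟨hl, hav⟩
    have hne : l ≠ [] := List.ne_nil_of_length_eq_add_one hl
    refine ⟨l.dropLast, ⟨by simp [hl], hav⟩, _, ⟨l.getLast hne, rfl⟩,
      List.dropLast_append_getLast hne⟩

theorem card_oneLetterExtensions (M : ℕ) :
    #(oneLetterExtensions S M) = #(avoiders S M) * Fintype.card α := by
  rw [oneLetterExtensions, card_image₂_append fun _ hu => (mem_avoiders.mp hu).1, card_words,
    pow_one]

theorem avoiders_succ_eq_filter (M : ℕ) :
    avoiders S (M + 1) = (oneLetterExtensions S M).filter (Avoids S) := by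
  ext l
  simp only [mem_avoiders, mem_filter, mem_oneLetterExtensions]
  exact ⟨fun ⟨hl, hav⟩ => ⟨⟨hl, hav.mono l.dropLast_prefix.isInfix⟩, hav⟩,
    fun ⟨⟨hl, _⟩, hav⟩ => ⟨hl, hav⟩⟩

theorem filter_not_avoids_oneLetterExtensions (hlen : ∀ X ∈ S, X.length = n)
    (h : mutUncorr (S : Set (List α))) {M : ℕ} (hn : n ≤ M + 1) :
    (oneLetterExtensions S M).filter (fun l => ¬ Avoids S l) =
      image₂ (· ++ ·) (avoiders S (M + 1 - n)) S := by
  ext l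
  simp only [mem_filter, mem_oneLetterExtensions, mem_image₂, mem_avoiders]
  constructor
  · rintro ⟨⟨hl, hav⟩, hocc⟩
    obtain ⟨X, hX, hXl⟩ : ∃ X ∈ S, X <:+: l := by simpa [Avoids] using hocc
    have hXne : X ≠ [] := fun hX0 => hav X hX (hX0 ▸ List.nil_infix)
    obtain ⟨v, rfl⟩ := hXl.isSuffix_of_not_infix_dropLast (hav X hX)
    rw [List.dropLast_append_of_ne_nil hXne] at hav
    refine ⟨v, ⟨?_, hav.mono (List.prefix_append v _).isInfix⟩, X, hX, rfl⟩
    rw [List.length_append, hlen X hX] at hl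
    omega
  · rintro ⟨v, ⟨hv, hav⟩, X, hX, rfl⟩
    have hXne : X ≠ [] := fun hX0 => hav X hX (hX0 ▸ List.nil_infix)
    refine ⟨⟨?_, ?_⟩, fun hall => hall X hX (List.suffix_append v X).isInfix⟩
    · rw [List.length_append, hv, hlen X hX]
      omega
    · rw [List.dropLast_append_of_ne_nil hXne]
      exact avoids_append_dropLast hlen h hav hX

theorem card_avoiders_succ_add (hlen : ∀ X ∈ S, X.length = n)
    (h : mutUncorr (S : Set (List α))) {M : ℕ} (hn : n ≤ M + 1) :
    #(avoiders S (M + 1)) + #(avoiders S (M + 1 - n)) * #S =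
      #(avoiders S M) * Fintype.card α := by
  rw [avoiders_succ_eq_filter, ← card_image₂_append (B := S) fun _ hu => (mem_avoiders.mp hu).1,
    ← filter_not_avoids_oneLetterExtensions hlen h hn,
    card_filter_add_card_filter_not, card_oneLetterExtensions]

open scoped Classical in
/-- Let `f N` be the number of words of length `N` over a 4-letter alphabet avoiding
`m` mutually uncorrelated patterns of length `n` as substrings. Then `f N = 4^N` for
`N < n` and `f N = 4·f (N−1) − m·f (N−n)` for `N ≥ n`; this is equivalent to the
generating function identity `F(z) = zⁿ/(m + (z−4)z^{n−1})`. -/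
theorem stmt7 (n m : ℕ) (hn : 0 < n) (S : Finset (List (Fin 4)))
    (hcard : S.card = m) (hlen : ∀ X ∈ S, X.length = n)
    (h : mutUncorr (↑S : Set (List (Fin 4))))
    (f : ℕ → ℕ)
    (hf : ∀ N : ℕ, f N = (Finset.univ.filter
      (fun w : Fin N → Fin 4 => ∀ X ∈ S, ¬ X <:+: List.ofFn w)).card) :
    (∀ N < n, f N = 4 ^ N) ∧
    ∀ N, n ≤ N → f N + m * f (N - n) = 4 * f (N - 1) := by
  have hf' (N : ℕ) : f N = #(avoiders S N) :=
    (hf N).trans (by convert card_filter_avoids_ofFn (S := S) N using 3; rfl)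
  refine ⟨fun N hN => ?_, fun N hN => ?_⟩
  · rw [hf', avoiders_eq_words_of_lt hlen hN, card_words, Fintype.card_fin]
  · obtain ⟨M, rfl⟩ : ∃ M, N = M + 1 := ⟨N - 1, by omega⟩
    have := card_avoiders_succ_add hlen h hN
    rw [Fintype.card_fin, hcard] at this
    rw [hf', hf', hf', Nat.add_sub_cancel]
    linarith
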